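/- arXiv:1303.6159 — 8 statements merged into one kernel-verified Lean document; each statement's English description precedes it below -/
import Mathlib

section
/- Let r = [r_0,...,r_d] and x = [x_0,...,x_d] be strictly increasing sequences of nonnegative integers. If the matrix T(r,x) with entries T(r,x)_{ij} = C(x_j, r_i) (binomial coefficient, 0 ≤ i,j ≤ d) is invertible, then r_i ≤ x_i for all i = 0,...,d. -/
theorem stmt_1 {d : ℕ} (r x : Fin (d + 1) → ℕ)
    (hr : StrictMono r) (hx : StrictMono x)
    (h : IsUnit (Matrix.of fun i j : Fin (d + 1) => ((x j).choose (r i) : ℚ))) :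
    ∀ i, r i ≤ x i := by
  intro i
  by_contra hlt
  push_neg at hlt
  rw [Matrix.isUnit_iff_isUnit_det] at h
  have hdet : (Matrix.of fun i j : Fin (d + 1) => ((x j).choose (r i) : ℚ)).det = 0 := by
    rw [Matrix.det_apply]
    apply Finset.sum_eq_zero
    intro σ _
    have hex : ∃ k : Fin (d + 1), k ≤ i ∧ i ≤ σ k := by
      by_contra hc
      push_neg at hc
      have hmaps : ∀ k ∈ Finset.Iic i, σ k ∈ Finset.Iio i := by
        intro k hk
        simp only [Finset.mem_Iic] at hk
        simpa using hc k hk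
      have hcard := Finset.card_le_card_of_injOn σ hmaps σ.injective.injOn
      rw [Fin.card_Iic, Fin.card_Iio] at hcard
      omega
    obtain ⟨k, hk, hik⟩ := hex
    have hz : ((x k).choose (r (σ k)) : ℚ) = 0 := by
      rw [Nat.choose_eq_zero_of_lt]
      · norm_num
      · calc x k ≤ x i := hx.monotone hk
          _ < r i := hlt
          _ ≤ r (σ k) := hr.monotone hik
    have hprod : ∏ j, (Matrix.of fun i j : Fin (d + 1) => ((x j).choose (r i) : ℚ)) (σ j) j = 0 :=
      Finset.prod_eq_zero (Finset.mem_univ k) (by simpa using hz)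
    simp only [Matrix.of_apply] at hprod
    simp only [Matrix.of_apply]
    rw [hprod, smul_zero]
  rw [hdet] at h
  simp at h
end

section
/- For strictly increasing sequences r = [r_0,...,r_d] and x = [x_0,...,x_d] of nonnegative integers, the matrix T(r,x) with entries C(x_j, r_i) is invertible if and only if all its diagonal entries C(x_k, r_k) are nonzero. -/
/-!
If `x k < r k`, every entry in a row `≥ k` and a column `≤ k` vanishes; every permutation meets
this zero block, so the determinant is `0`.

Conversely the determinant is positive when `r ≤ x`. If `x 0 = 0` the first column is the first
unit vector and one passes to the minor. Otherwise write `x = y + 1`: Pascal's rule splits each row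
of `T(r, y + 1)` into a sum of two rows, so by multilinearity `det T(r, y + 1)` is the sum of the
`det T(r', y)` where `r'` lowers some of the `r i` by one. Every summand is `≥ 0` by induction
(it is `0` unless `r'` is strictly increasing), and the one lowering exactly the rows with
`r k = y k + 1` is `> 0`.
-/

open Matrix Finset

variable (R : Type*) [CommRing R]

def binomialMatrix {n : ℕ} (r x : Fin n → ℕ) : Matrix (Fin n) (Fin n) R :=
  Matrix.of fun i j => ((x j).choose (r i) : R)

variable {R}

@[simp]
lemma binomialMatrix_apply {n : ℕ} (r x : Fin n → ℕ) (i j : Fin n) :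
    binomialMatrix R r x i j = (x j).choose (r i) := rfl

@[simp]
lemma binomialMatrix_submatrix {m n : ℕ} (r x : Fin n → ℕ) (f g : Fin m → Fin n) :
    (binomialMatrix R r x).submatrix f g = binomialMatrix R (r ∘ f) (x ∘ g) := rfl

lemma Fin.exists_le_le_perm_apply {n : ℕ} (σ : Equiv.Perm (Fin n)) (k : Fin n) :
    ∃ i ≤ k, k ≤ σ i := by
  by_contra! h
  have := card_le_card_of_injOn σ (s := Iic k) (t := Iio k)
    (fun i hi => by simpa using h i (by simpa using hi)) σ.injective.injOn
  simp [Fin.card_Iic, Fin.card_Iio] at this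

theorem det_binomialMatrix_eq_zero_of_lt {n : ℕ} {r x : Fin n → ℕ} (hr : Monotone r)
    (hx : Monotone x) {k : Fin n} (hk : x k < r k) : (binomialMatrix R r x).det = 0 := by
  rw [det_apply]
  refine sum_eq_zero fun σ _ => ?_
  obtain ⟨i, hik, hki⟩ := Fin.exists_le_le_perm_apply σ k
  have hzero : binomialMatrix R r x (σ i) i = 0 := by
    simp [Nat.choose_eq_zero_of_lt ((hx hik).trans_lt (hk.trans_le (hr hki)))]
  exact smul_eq_zero_of_right _ (prod_eq_zero (mem_univ i) hzero)

theorem det_binomialMatrix_eq_zero_of_not_injective {n : ℕ} {r : Fin n → ℕ}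
    (hr : ¬ Function.Injective r) (x : Fin n → ℕ) : (binomialMatrix R r x).det = 0 := by
  obtain ⟨a, b, hab, hne⟩ := Function.not_injective_iff.1 hr
  exact det_zero_of_row_eq hne (funext fun j => by simp [hab])

theorem det_binomialMatrix_of_zero {n : ℕ} {r x : Fin (n + 1) → ℕ} (hr : StrictMono r)
    (hr0 : r 0 = 0) (hx0 : x 0 = 0) :
    (binomialMatrix R r x).det = (binomialMatrix R (r ∘ Fin.succ) (x ∘ Fin.succ)).det := by
  rw [det_succ_column_zero, Fin.sum_univ_succ, sum_eq_zero fun i _ => ?_]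
  · simp [hr0, hx0]
  · have : 0 < r i.succ := hr0 ▸ hr (Fin.succ_pos i)
    simp [hx0, Nat.choose_eq_zero_of_lt this]

theorem det_binomialMatrix_succ {n : ℕ} (r y : Fin n → ℕ) :
    (binomialMatrix R r fun k => y k + 1).det =
      ∑ S ∈ ({i | r i ≠ 0} : Finset (Fin n)).powerset,
        (binomialMatrix R (fun i => r i - if i ∈ S then 1 else 0) y).det := by
  set D : Matrix (Fin n) (Fin n) R := .of fun i j => if r i = 0 then 0 else (y j).choose (r i - 1)
  have hpascal : binomialMatrix R r (fun k => y k + 1) = D + binomialMatrix R r y := by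
    ext i j
    cases hri : r i <;> simp [D, hri, Nat.choose_succ_succ']
  have hmultilinear : (D + binomialMatrix R r y).det =
      ∑ S : Finset (Fin n), det (S.piecewise D (binomialMatrix R r y)) :=
    detRowAlternating.map_add_univ D (binomialMatrix R r y)
  rw [hpascal, hmultilinear]
  refine (sum_subset (subset_univ _) fun S _ hS => ?_).symm.trans (sum_congr rfl fun S hS => ?_)
  · obtain ⟨i, hiS, hri⟩ : ∃ i ∈ S, r i = 0 := by simpa [subset_iff] using hS
    exact det_eq_zero_of_row_eq_zero i fun j => by
      simp [Finset.piecewise, D, hiS, hri]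
  · congr 1
    ext i j : 1
    by_cases hiS : i ∈ S
    · have hri : r i ≠ 0 := by simpa using mem_powerset.1 hS hiS
      simp [Finset.piecewise, D, hiS, hri]
    · simp [Finset.piecewise, hiS]

lemma monotone_sub_ite_mem {n : ℕ} {r : Fin n → ℕ} (hr : StrictMono r) (S : Finset (Fin n)) :
    Monotone fun i => r i - if i ∈ S then 1 else 0 := by
  intro a b hab
  obtain rfl | hlt := hab.eq_or_lt
  · rfl
  · have := hr hlt
    dsimp only
    split_ifs <;> omega

lemma strictMono_sub_ite_eq_succ {n : ℕ} {r y : Fin n → ℕ} (hr : StrictMono r)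
    (hy : StrictMono y) (hry : ∀ k, r k ≤ y k + 1) :
    StrictMono fun i => r i - if i ∈ ({k | r k = y k + 1} : Finset (Fin n)) then 1 else 0 := by
  intro a b hab
  have := hr hab
  have := hy hab
  have := hry a
  simp only [mem_filter, mem_univ, true_and]
  split_ifs <;> omega

variable [PartialOrder R] [IsStrictOrderedRing R]

theorem det_binomialMatrix_pos :
    ∀ {n : ℕ} {r x : Fin n → ℕ}, StrictMono r → StrictMono x → (∀ k, r k ≤ x k) →
      0 < (binomialMatrix R r x).det
  | 0, _, _, _, _, _ => by simp
  | n + 1, r, x, hr, hx, hrx => by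
    obtain ⟨c, hc⟩ : ∃ c, x 0 = c := ⟨_, rfl⟩
    induction c generalizing r x with
    | zero =>
      rw [det_binomialMatrix_of_zero hr (by simpa [hc] using hrx 0) hc]
      exact det_binomialMatrix_pos (hr.comp Fin.strictMono_succ) (hx.comp Fin.strictMono_succ)
        fun k => hrx k.succ
    | succ c ih =>
      obtain ⟨y, rfl⟩ : ∃ y : Fin (n + 1) → ℕ, x = fun k => y k + 1 :=
        ⟨fun k => x k - 1, funext fun k => by
          have := hx.monotone (Fin.zero_le k)
          dsimp only
          omega⟩
      beta_reduce at hx hrx hc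
      have hy : StrictMono y := fun a b hab => by simpa using hx hab
      have hnonneg : ∀ s, Monotone s → 0 ≤ (binomialMatrix R s y).det := by
        intro s hs
        by_cases hinj : Function.Injective s
        swap
        · exact (det_binomialMatrix_eq_zero_of_not_injective hinj y).ge
        by_cases hsy : ∀ k, s k ≤ y k
        · exact (ih _ _ (hs.strictMono_of_injective hinj) hy hsy (by simpa using hc)).le
        · push Not at hsy
          obtain ⟨k, hk⟩ := hsy
          exact (det_binomialMatrix_eq_zero_of_lt hs hy.monotone hk).ge
      rw [det_binomialMatrix_succ]
      refine sum_pos' (fun S _ => hnonneg _ (monotone_sub_ite_mem hr S))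
        ⟨({k | r k = y k + 1} : Finset _), ?_, ?_⟩
      · simp +contextual [subset_iff]
      · refine ih _ _ (strictMono_sub_ite_eq_succ hr hy hrx) hy (fun k => ?_) (by simpa using hc)
        have := hrx k
        simp only [mem_filter, mem_univ, true_and]
        split_ifs <;> omega

theorem stmt_3 {d : ℕ} (r x : Fin (d + 1) → ℕ)
    (hr : StrictMono r) (hx : StrictMono x) :
    IsUnit (Matrix.of fun i j : Fin (d + 1) => ((x j).choose (r i) : ℚ)) ↔
      ∀ k : Fin (d + 1), (x k).choose (r k) ≠ 0 := by
  change IsUnit (binomialMatrix ℚ r x) ↔ _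
  simp only [isUnit_iff_isUnit_det, isUnit_iff_ne_zero, ne_eq, Nat.choose_eq_zero_iff, not_lt]
  refine ⟨fun hdet k => ?_, fun hrx => (det_binomialMatrix_pos hr hx hrx).ne'⟩
  by_contra! hk
  exact hdet (det_binomialMatrix_eq_zero_of_lt hr.monotone hx.monotone hk)
end

section
/- Let r = [r_0,...,r_d] and x = [x_0,...,x_d] be strictly increasing sequences of nonnegative integers. The matrix T(r,x) with entries T(r,x)_{ij} = C(x_j, r_i) is invertible if and only if r_i ≤ x_i for every i = 0,...,d. -/
/-!
Pascal's rule `C(y + 1, k) = C(y, k) + C(y, k - 1)` splits every row of `T(r, y + 1)`, so by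
multilinearity `det T(r, y + 1)` is the sum of the `det T(ρ, y)` with `ρ i ∈ {r i - 1, r i}`.
Every such `ρ` is monotone, hence each summand either vanishes (a repeated row, or some
`y i < ρ i`, which puts a zero into every term of the Leibniz expansion) or is positive by
induction, and the summand `ρ = min r y` is positive. When `x 0 = 0` the first column is `e₀`
and one drops a dimension instead. So `det T(r, x) > 0` as soon as `r ≤ x`.
-/

open Finset

theorem Nat.choose_succ_left_eq_sum_Icc (m k : ℕ) :
    (m + 1).choose k = ∑ j ∈ Icc (k - 1) k, m.choose j := by
  rcases k with _ | k
  · simp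
  · rw [Nat.choose_succ_succ, Nat.add_sub_cancel, sum_Icc_succ_top k.le_succ, Icc_self,
      sum_singleton]

theorem StrictMono.monotone_of_mem_Icc_sub_one {ι : Type*} [PartialOrder ι] {r ρ : ι → ℕ}
    (hr : StrictMono r) (hρ : ∀ i, ρ i ∈ Icc (r i - 1) (r i)) : Monotone ρ := by
  intro a b hab
  rcases hab.lt_or_eq with hab | rfl
  · have := hr hab
    have ha := mem_Icc.mp (hρ a)
    have hb := mem_Icc.mp (hρ b)
    omega
  · rfl

namespace Matrix

variable (R : Type*)

def pascal [Semiring R] : Matrix ℕ ℕ R :=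
  of fun k m => (m.choose k : R)

variable {R} [CommRing R] {n : ℕ}

theorem det_pascal_submatrix_eq_zero_of_lt {r x : Fin n → ℕ} (hr : Monotone r)
    (hx : Monotone x) {i : Fin n} (hi : x i < r i) : ((pascal R).submatrix r x).det = 0 := by
  refine (det_apply _).trans <| sum_eq_zero fun σ _ => ?_
  obtain ⟨j, hji, hiσj⟩ : ∃ j ≤ i, i ≤ σ j := by
    by_contra! h
    have := card_le_card_of_injOn σ (s := Iic i) (t := Iio i)
      (fun j hj => by simpa using h j (by simpa using hj)) σ.injective.injOn
    simp at this
  have hzero : x j < r (σ j) := (hx hji).trans_lt (hi.trans_le (hr hiσj))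
  rw [prod_eq_zero (mem_univ j) (by simp [pascal, Nat.choose_eq_zero_of_lt hzero]), smul_zero]

theorem det_pascal_submatrix_add_one (r y : Fin n → ℕ) :
    ((pascal R).submatrix r (y + 1)).det =
      ∑ ρ ∈ Fintype.piFinset fun i => Icc (r i - 1) (r i), ((pascal R).submatrix ρ y).det := by
  have hrows : (pascal R).submatrix r (y + 1) =
      fun i => ∑ k ∈ Icc (r i - 1) (r i), fun j => pascal R k (y j) := by
    ext i j
    simp [pascal, Nat.choose_succ_left_eq_sum_Icc]
  rw [hrows]
  exact detRowAlternating.toMultilinearMap.map_sum_finset _ _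

theorem det_pascal_submatrix_of_zero {r x : Fin (n + 1) → ℕ} (hr0 : r 0 = 0) (hx0 : x 0 = 0)
    (hr : ∀ i, r (Fin.succ i) ≠ 0) :
    ((pascal R).submatrix r x).det =
      ((pascal R).submatrix (r ∘ Fin.succ) (x ∘ Fin.succ)).det := by
  rw [det_succ_column_zero, sum_eq_single 0]
  · simp [pascal, hr0, hx0, submatrix_submatrix]
  · intro i _ hi
    obtain ⟨i, rfl⟩ := Fin.exists_succ_eq.mpr hi
    simp [pascal, hx0, Nat.choose_eq_zero_of_lt (Nat.pos_of_ne_zero (hr i))]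
  · simp

theorem det_pascal_submatrix_nonneg_of_pos [Preorder R] {y : Fin n → ℕ} (hy : StrictMono y)
    (hpos : ∀ r, StrictMono r → r ≤ y → 0 < ((pascal R).submatrix r y).det)
    {r : Fin n → ℕ} (hr : Monotone r) : 0 ≤ ((pascal R).submatrix r y).det := by
  by_cases hinj : Function.Injective r
  · by_cases hry : r ≤ y
    · exact (hpos r (hr.strictMono_of_injective hinj) hry).le
    · obtain ⟨i, hi⟩ : ∃ i, y i < r i := by simpa [Pi.le_def] using hry
      rw [det_pascal_submatrix_eq_zero_of_lt hr hy.monotone hi]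
  · obtain ⟨i, j, hij, hne⟩ : ∃ i j, r i = r j ∧ i ≠ j := by
      simpa [Function.Injective] using hinj
    rw [det_zero_of_row_eq hne (by ext k; simp [hij])]

theorem det_pascal_submatrix_pos [PartialOrder R] [IsStrictOrderedRing R] :
    ∀ {n : ℕ} {r x : Fin n → ℕ}, StrictMono r → StrictMono x → r ≤ x →
      0 < ((pascal R).submatrix r x).det
  | 0, _, _, _, _, _ => by simp
  | n + 1, r, x, hr, hx, hrx => by
    by_cases hx0 : x 0 = 0
    · have hr0 : r 0 = 0 := by simpa [hx0] using hrx 0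
      rw [det_pascal_submatrix_of_zero hr0 hx0 fun i => (hr0 ▸ hr (Fin.succ_pos i)).ne']
      exact det_pascal_submatrix_pos (hr.comp Fin.strictMono_succ) (hx.comp Fin.strictMono_succ)
        fun i => hrx i.succ
    · set y : Fin (n + 1) → ℕ := fun i => x i - 1
      have hxy : x = y + 1 := by
        ext i
        have := hx.monotone (Fin.zero_le i)
        simp only [y, Pi.add_apply, Pi.one_apply]
        omega
      have hy : StrictMono y := fun i j hij => by
        have := hx hij
        have := hx.monotone (Fin.zero_le i)
        simp only [y]
        omega
      have hry : r ≤ y + 1 := hxy ▸ hrx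
      rw [hxy, det_pascal_submatrix_add_one]
      refine sum_pos' (fun ρ hρ => det_pascal_submatrix_nonneg_of_pos hy
        (fun r' hr' hr'y => det_pascal_submatrix_pos hr' hy hr'y)
        (hr.monotone_of_mem_Icc_sub_one (Fintype.mem_piFinset.mp hρ))) ⟨r ⊓ y, ?_, ?_⟩
      · refine Fintype.mem_piFinset.mpr fun i => mem_Icc.mpr ⟨?_, inf_le_left⟩
        have := hry i
        simp only [Pi.inf_apply, Pi.add_apply, Pi.one_apply] at this ⊢
        omega
      · exact det_pascal_submatrix_pos (fun i j hij => min_lt_min (hr hij) (hy hij)) hy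
          inf_le_right
termination_by n _ x => n + ∑ i, x i
decreasing_by
  · simp only [Fin.sum_univ_succ x, Function.comp_apply]
    omega
  all_goals
    exact Nat.add_lt_add_left
      (sum_lt_sum (fun i _ => Nat.sub_le _ _) ⟨0, mem_univ _, by omega⟩) _

theorem det_pascal_submatrix_ne_zero_iff [PartialOrder R] [IsStrictOrderedRing R]
    {r x : Fin n → ℕ} (hr : StrictMono r) (hx : StrictMono x) :
    ((pascal R).submatrix r x).det ≠ 0 ↔ r ≤ x := by
  refine ⟨fun hdet => ?_, fun hrx => (det_pascal_submatrix_pos hr hx hrx).ne'⟩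
  by_contra hrx
  obtain ⟨i, hi⟩ : ∃ i, x i < r i := by simpa [Pi.le_def] using hrx
  exact hdet (det_pascal_submatrix_eq_zero_of_lt hr.monotone hx.monotone hi)

end Matrix

theorem stmt_4 {d : ℕ} (r x : Fin (d + 1) → ℕ)
    (hr : StrictMono r) (hx : StrictMono x) :
    IsUnit (Matrix.of fun i j : Fin (d + 1) => ((x j).choose (r i) : ℚ)) ↔
      ∀ i, r i ≤ x i := by
  rw [Matrix.isUnit_iff_isUnit_det, isUnit_iff_ne_zero]
  exact Matrix.det_pascal_submatrix_ne_zero_iff hr hx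
end

section
/- With E the incidence matrix defined from strictly increasing sequences r, x in {0,...,n} (e_{0j}=1 iff j is in the complement x̄ of x, e_{1j}=1 iff j ∈ r): E satisfies the Pólya condition (M_j ≥ j+1 for all j = 0,...,n, where M_j is the number of ones in columns 0..j) if and only if r_k ≤ x_k for all k = 0,...,d. -/
theorem stmt_9 {n d : ℕ} (r x : Fin (d + 1) → ℕ)
    (hr : StrictMono r) (hx : StrictMono x)
    (hrn : ∀ i, r i ≤ n) (hxn : ∀ i, x i ≤ n) :
    (∀ j ≤ n, j + 1 ≤ ∑ t ∈ Finset.range (j + 1),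
        ((if ∃ i, x i = t then 0 else 1) + (if ∃ i, r i = t then 1 else 0))) ↔
      ∀ k, r k ≤ x k := by
  classical
  have key : ∀ (f : Fin (d+1) → ℕ), Function.Injective f → ∀ j : ℕ,
      (∑ t ∈ Finset.range (j+1), if ∃ i, f i = t then (1:ℕ) else 0) =
      (Finset.univ.filter fun i => f i ≤ j).card := by
    intro f hf j
    rw [← Finset.card_filter]
    have him : (Finset.range (j+1)).filter (fun t => ∃ i, f i = t) =
        (Finset.univ.filter fun i => f i ≤ j).image f := by
      ext t
      simp only [Finset.mem_filter, Finset.mem_range, Finset.mem_image,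
        Finset.mem_univ, true_and, Nat.lt_succ_iff]
      constructor
      · rintro ⟨ht, i, rfl⟩; exact ⟨i, ht, rfl⟩
      · rintro ⟨i, hi, rfl⟩; exact ⟨hi, i, rfl⟩
    rw [him, Finset.card_image_of_injective _ hf]
  have main : ∀ j : ℕ,
      (j + 1 ≤ ∑ t ∈ Finset.range (j + 1),
        ((if ∃ i, x i = t then 0 else 1) + (if ∃ i, r i = t then 1 else 0))) ↔
      (Finset.univ.filter fun i => x i ≤ j).card ≤
        (Finset.univ.filter fun i => r i ≤ j).card := by
    intro j
    rw [Finset.sum_add_distrib, key r hr.injective j]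
    have hs : (∑ t ∈ Finset.range (j+1), if ∃ i, x i = t then (0:ℕ) else 1) =
        ((Finset.range (j+1)).filter (fun t => ¬ ∃ i, x i = t)).card := by
      rw [Finset.card_filter]
      exact Finset.sum_congr rfl (fun t _ => (ite_not _ _ _).symm)
    rw [hs]
    have hsplit := Finset.card_filter_add_card_filter_not
      (s := Finset.range (j+1)) (p := fun t => ∃ i, x i = t)
    have hxcard : ((Finset.range (j+1)).filter (fun t => ∃ i, x i = t)).card =
        (Finset.univ.filter fun i => x i ≤ j).card := by
      rw [Finset.card_filter]; exact key x hx.injective j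
    rw [Finset.card_range] at hsplit
    omega
  constructor
  · intro h k
    by_contra hcon
    push_neg at hcon
    have hm := (main (x k)).1 (h (x k) (hxn k))
    have h1 : (k : ℕ) + 1 ≤ (Finset.univ.filter fun i => x i ≤ x k).card := by
      have hsub : Finset.Iic k ⊆ Finset.univ.filter fun i => x i ≤ x k := by
        intro i hi
        simp only [Finset.mem_Iic] at hi
        simp only [Finset.mem_filter, Finset.mem_univ, true_and]
        exact hx.monotone hi
      have := Finset.card_le_card hsub
      rwa [Fin.card_Iic] at this
    have h2 : (Finset.univ.filter fun i => r i ≤ x k).card ≤ (k : ℕ) := by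
      have hsub : (Finset.univ.filter fun i => r i ≤ x k) ⊆ Finset.Iio k := by
        intro i hi
        simp only [Finset.mem_filter, Finset.mem_univ, true_and] at hi
        simp only [Finset.mem_Iio]
        by_contra h'
        push_neg at h'
        exact absurd (le_trans (hr.monotone h') hi) (not_le.mpr hcon)
      have := Finset.card_le_card hsub
      rwa [Fin.card_Iio] at this
    omega
  · intro h j _
    refine (main j).2 (Finset.card_le_card ?_)
    intro i hi
    simp only [Finset.mem_filter, Finset.mem_univ, true_and] at hi ⊢
    exact le_trans (h i) hi
end

section
/- If r_k > x_k for some k (r, x strictly increasing in [0,n]), then the incidence matrix E built from r and x̄ fails the Pólya condition: there exists j with M_j ≤ j. -/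
theorem stmt_11 {n d : ℕ} (r x : Fin (d + 1) → ℕ)
    (hr : StrictMono r) (hx : StrictMono x)
    (hrn : ∀ i, r i ≤ n) (hxn : ∀ i, x i ≤ n)
    (k : Fin (d + 1)) (hk : x k < r k) :
    ∃ j ≤ n, (∑ t ∈ Finset.range (j + 1),
        ((if ∃ i, x i = t then 0 else 1) + (if ∃ i, r i = t then 1 else 0))) ≤ j := by
  set j := r k - 1 with hj
  have hj1 : j + 1 = r k := by omega
  refine ⟨j, by have := hrn k; omega, ?_⟩
  rw [Finset.sum_add_distrib]
  set A := (Finset.range (j+1)).filter (fun t => ∃ i, x i = t) with hA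
  set B := (Finset.range (j+1)).filter (fun t => ∃ i, r i = t) with hB
  have h1 : ∑ t ∈ Finset.range (j+1), (if ∃ i, x i = t then (0:ℕ) else 1)
      = (j+1) - A.card := by
    rw [Finset.sum_ite, Finset.sum_const, Finset.sum_const, smul_eq_mul, smul_eq_mul,
      mul_zero, mul_one, zero_add]
    have := Finset.card_filter_add_card_filter_not
      (s := Finset.range (j+1)) (p := fun t => ∃ i, x i = t)
    rw [← hA] at this
    simp only [Finset.card_range] at this
    omega
  have h2 : ∑ t ∈ Finset.range (j+1), (if ∃ i, r i = t then (1:ℕ) else 0)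
      = B.card := by
    rw [Finset.sum_ite, Finset.sum_const, Finset.sum_const, smul_eq_mul, smul_eq_mul,
      mul_one, mul_zero, add_zero]
  rw [h1, h2]
  have hAcard : (k:ℕ) + 1 ≤ A.card := by
    have hsub : (Finset.Iic k).image x ⊆ A := by
      intro t ht
      obtain ⟨i, hi, rfl⟩ := Finset.mem_image.mp ht
      rw [Finset.mem_Iic] at hi
      refine Finset.mem_filter.mpr ⟨Finset.mem_range.mpr ?_, ⟨i, rfl⟩⟩
      have : x i ≤ x k := hx.monotone hi
      omega
    have := Finset.card_le_card hsub
    rwa [Finset.card_image_of_injective _ hx.injective, Fin.card_Iic] at this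
  have hBcard : B.card ≤ (k:ℕ) := by
    have hsub : B ⊆ (Finset.Iio k).image r := by
      intro t ht
      obtain ⟨ht1, i, rfl⟩ := Finset.mem_filter.mp ht
      rw [Finset.mem_range] at ht1
      refine Finset.mem_image.mpr ⟨i, Finset.mem_Iio.mpr ?_, rfl⟩
      by_contra h
      have : r k ≤ r i := hr.monotone (not_lt.mp h)
      omega
    have := Finset.card_le_card hsub
    calc B.card ≤ ((Finset.Iio k).image r).card := this
      _ ≤ (Finset.Iio k).card := Finset.card_image_le
      _ = (k:ℕ) := Fin.card_Iio k
  have hAle : A.card ≤ j + 1 := by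
    have := Finset.card_filter_le (Finset.range (j+1)) (fun t => ∃ i, x i = t)
    simpa [hA] using this
  omega
end

section
/- If r_k ≤ x_k for all k = 0,...,d (r, x strictly increasing in [0,n]), then the incidence matrix E built from r and the complement x̄ of x satisfies the Pólya condition: M_j ≥ j+1 for every j = 0,...,n. -/
theorem stmt_12 {n d : ℕ} (r x : Fin (d + 1) → ℕ)
    (hr : StrictMono r) (hx : StrictMono x)
    (hrn : ∀ i, r i ≤ n) (hxn : ∀ i, x i ≤ n)
    (hle : ∀ k, r k ≤ x k) :
    ∀ j ≤ n, j + 1 ≤ ∑ t ∈ Finset.range (j + 1),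
        ((if ∃ i, x i = t then 0 else 1) + (if ∃ i, r i = t then 1 else 0)) := by
  intro j hj
  classical
  set A := (Finset.range (j+1)).filter (fun t => ∃ i, x i = t) with hA
  set B := (Finset.range (j+1)).filter (fun t => ∃ i, r i = t) with hB
  have hsum : ∑ t ∈ Finset.range (j+1),
      ((if ∃ i, x i = t then 0 else 1) + (if ∃ i, r i = t then 1 else 0))
      = ((Finset.range (j+1)).filter (fun t => ¬ ∃ i, x i = t)).card + B.card := by
    rw [Finset.sum_add_distrib]
    congr 1
    · rw [Finset.card_filter]
      exact Finset.sum_congr rfl fun t _ => by by_cases h : ∃ i, x i = t <;> simp [h]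
    · rw [Finset.card_filter]
  have hAcard : A = (Finset.univ.filter (fun i => x i ≤ j)).image x := by
    ext t
    simp only [hA, Finset.mem_filter, Finset.mem_range, Finset.mem_image, Finset.mem_univ,
      true_and, Nat.lt_succ_iff]
    constructor
    · rintro ⟨ht, i, rfl⟩; exact ⟨i, ht, rfl⟩
    · rintro ⟨i, hi, rfl⟩; exact ⟨hi, i, rfl⟩
  have hBcard : B = (Finset.univ.filter (fun i => r i ≤ j)).image r := by
    ext t
    simp only [hB, Finset.mem_filter, Finset.mem_range, Finset.mem_image, Finset.mem_univ,
      true_and, Nat.lt_succ_iff]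
    constructor
    · rintro ⟨ht, i, rfl⟩; exact ⟨i, ht, rfl⟩
    · rintro ⟨i, hi, rfl⟩; exact ⟨hi, i, rfl⟩
  have hcardA : A.card = (Finset.univ.filter (fun i => x i ≤ j)).card := by
    rw [hAcard, Finset.card_image_of_injective _ hx.injective]
  have hcardB : B.card = (Finset.univ.filter (fun i => r i ≤ j)).card := by
    rw [hBcard, Finset.card_image_of_injective _ hr.injective]
  have hAB : A.card ≤ B.card := by
    rw [hcardA, hcardB]
    apply Finset.card_le_card
    intro i hi
    simp only [Finset.mem_filter, Finset.mem_univ, true_and] at hi ⊢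
    exact le_trans (hle i) hi
  have hAle : A.card ≤ j + 1 := le_trans (Finset.card_filter_le _ _) (by simp)
  have hcompl : ((Finset.range (j+1)).filter (fun t => ¬ ∃ i, x i = t)).card
      = (j + 1) - A.card := by
    rw [hA, Finset.filter_not, Finset.card_sdiff_of_subset (Finset.filter_subset _ _)]
    simp
  rw [hsum, hcompl]
  omega
end

section
/- (Two-point Pólya/Whittaker theorem.) Let E = [e_{ij}] be a 2×(n+1) 0-1 matrix with exactly n+1 ones, with rows indexed by points t_0 = 0, t_1 = 1. The (n+1)×(n+1) matrix whose rows are indexed by pairs (i,j) with e_{ij}=1 and whose row for (i,j) is [D^j(t^0)(t_i), D^j(t^1)(t_i), ..., D^j(t^n)(t_i)] (j-th derivative of each monomial evaluated at t_i) is invertible if and only if E satisfies the Pólya condition M_j ≥ j+1 for all j. -/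
/-!
The row of `(0, j)`, i.e. of `p ↦ p^{(j)}(0)`, has the single nonzero entry `j!` in column `j`.
So the matrix is invertible iff the block with rows `B = {b | e_{1b} = 1}`, columns
`C = {m | e_{0m} = 0}` and entries `c^{(b)} = c (c - 1) ⋯ (c - b + 1)` is. If `M_j < j + 1`, the
first `j + 1` columns are supported on `M_j` rows, and the determinant vanishes. Conversely, the
Pólya condition says that the `k`-th smallest element `b_k` of `B` is at most the `k`-th smallest
element `c_k` of `C`, and then `det [c_l^{(b_k)}] > 0`: this determinant is `P_b(1)` for
`P_b(x) = det [D^{b_k} x^{c_l}]`, whose derivative is `∑_k P_{b + e_k}`. By induction on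
`∑ (c_k - b_k)`, `P_b` is a nonzero polynomial with nonnegative coefficients: for `b = c` it is
the constant `∏ c_k!`, and otherwise `P_b(0) = 0` while some `P_{b + e_k}` again satisfies
`b + e_k ≤ c`.
-/

open Polynomial Matrix Finset

theorem Matrix.det_eq_zero_of_card_lt {ι R : Type*} [Fintype ι] [DecidableEq ι] [CommRing R]
    (M : Matrix ι ι R) {S T : Finset ι} (hST : #T < #S)
    (h : ∀ i ∉ T, ∀ j ∈ S, M i j = 0) : M.det = 0 := by
  rw [det_apply']
  refine sum_eq_zero fun σ _ => ?_
  obtain ⟨j, hjS, hjT⟩ : ∃ j ∈ S, σ j ∉ T := by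
    by_contra! hsub
    exact (card_le_card_of_injOn σ hsub σ.injective.injOn).not_gt hST
  exact mul_eq_zero_of_right _ (prod_eq_zero (mem_univ j) (h _ hjT j hjS))

theorem Polynomial.derivative_det_eq_sum_updateCol {ι R : Type*} [Fintype ι] [DecidableEq ι]
    [CommRing R] (M : Matrix ι ι R[X]) :
    derivative M.det = ∑ j, (M.updateCol j fun i => derivative (M i j)).det := by
  simp only [det_apply', map_sum, updateCol_apply]
  rw [sum_comm]
  refine sum_congr rfl fun σ _ => ?_
  rw [derivative_intCast_mul, derivative_prod_finset, mul_sum]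
  refine sum_congr rfl fun j _ => ?_
  have hupdate : (fun i => if i = j then derivative (M (σ i) j) else M (σ i) i) =
      Function.update (fun i => M (σ i) i) j (derivative (M (σ j) j)) := by
    funext i
    by_cases h : i = j <;> simp [h]
  rw [hupdate, prod_update_of_mem (mem_univ j), sdiff_singleton_eq_erase,
    mul_comm (derivative _)]

theorem Polynomial.derivative_det_eq_sum_updateRow {ι R : Type*} [Fintype ι] [DecidableEq ι]
    [CommRing R] (M : Matrix ι ι R[X]) :
    derivative M.det = ∑ i, (M.updateRow i fun j => derivative (M i j)).det := by
  rw [← det_transpose, derivative_det_eq_sum_updateCol]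
  refine sum_congr rfl fun i _ => ?_
  rw [updateCol_transpose, det_transpose]
  rfl

theorem nonempty_filter_lt_of_le_of_ne {ι : Type*} [Fintype ι] {b c : ι → ℕ} (hbc : b ≤ c)
    (hne : b ≠ c) : ({k | b k < c k} : Finset ι).Nonempty := by
  obtain ⟨k, hk⟩ := Function.ne_iff.mp hne
  exact ⟨k, by simpa using (hbc k).lt_of_ne hk⟩

section IncreasingSequences

variable {ι : Type*} [LinearOrder ι] {b c : ι → ℕ}

theorem StrictMono.update_add_one (hb : StrictMono b) {k : ι} (hk : ∀ j ≠ k, b j ≠ b k + 1) :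
    StrictMono (Function.update b k (b k + 1)) := by
  intro x y hxy
  have hbxy := hb hxy
  rcases eq_or_ne x k with rfl | hx
  · rw [Function.update_self, Function.update_of_ne hxy.ne']
    have := hk y hxy.ne'
    omega
  rcases eq_or_ne y k with rfl | hy
  · rw [Function.update_self, Function.update_of_ne hx]
    omega
  · rwa [Function.update_of_ne hx, Function.update_of_ne hy]

theorem update_add_one_le (hbc : b ≤ c) {k : ι} (hk : b k < c k) :
    Function.update b k (b k + 1) ≤ c := fun j => by
  rcases eq_or_ne j k with rfl | hj
  · simpa using hk
  · simpa [hj] using hbc j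

variable [Fintype ι]

theorem sum_tsub_update_add_one_lt {k : ι} (h : Function.update b k (b k + 1) ≤ c) :
    ∑ j, (c j - Function.update b k (b k + 1) j) < ∑ j, (c j - b j) := by
  have hk : b k + 1 ≤ c k := by simpa using h k
  refine sum_lt_sum (fun j _ => ?_) ⟨k, mem_univ _, ?_⟩
  · rcases eq_or_ne j k with rfl | hj
    · rw [Function.update_self]
      omega
    · rw [Function.update_of_ne hj]
  · rw [Function.update_self]
    omega

/-- The witness is the last index with `b k < c k`. -/
theorem exists_update_add_one_strictMono_le (hb : StrictMono b) (hc : StrictMono c)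
    (hbc : b ≤ c) (hne : b ≠ c) :
    ∃ k, StrictMono (Function.update b k (b k + 1)) ∧ Function.update b k (b k + 1) ≤ c := by
  have hD := nonempty_filter_lt_of_le_of_ne hbc hne
  set k₀ := max' _ hD
  have hk₀ : b k₀ < c k₀ := by simpa using max'_mem _ hD
  refine ⟨k₀, hb.update_add_one fun j hj => ?_, update_add_one_le hbc hk₀⟩
  rcases hj.lt_or_gt with hj | hj
  · have := hb hj
    omega
  · have h₁ := hc hj
    have h₂ : b j = c j :=
      (hbc j).eq_of_not_lt fun h => hj.not_ge (le_max' _ j (by simpa using h))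
    omega

/-- The witness is the first index with `b k < c k`. -/
theorem exists_forall_ne_of_le_of_ne (hb : StrictMono b) (hc : StrictMono c) (hbc : b ≤ c)
    (hne : b ≠ c) : ∃ k, ∀ l, c l ≠ b k := by
  have hD := nonempty_filter_lt_of_le_of_ne hbc hne
  set k₁ := min' _ hD
  have hk₁ : b k₁ < c k₁ := by simpa using min'_mem _ hD
  refine ⟨k₁, fun l => ?_⟩
  rcases lt_or_ge l k₁ with hl | hl
  · have h₁ := hb hl
    have h₂ : b l = c l :=
      (hbc l).eq_of_not_lt fun h => hl.not_ge (min'_le _ l (by simpa using h))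
    omega
  · have := hc.monotone hl
    omega

end IncreasingSequences

section NonnegCoeff

variable {R : Type*} [CommRing R] [LinearOrder R] [IsStrictOrderedRing R]

theorem Polynomial.coeff_nonneg_of_derivative {p : R[X]} (h0 : p.coeff 0 = 0)
    (h : ∀ i, 0 ≤ (derivative p).coeff i) (i : ℕ) : 0 ≤ p.coeff i := by
  cases i with
  | zero => rw [h0]
  | succ i =>
    have hi := h i
    rw [coeff_derivative] at hi
    exact nonneg_of_mul_nonneg_left hi (by positivity)

theorem Polynomial.eval_one_pos_of_coeff_nonneg {p : R[X]} (h : ∀ i, 0 ≤ p.coeff i)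
    (hp : p ≠ 0) : 0 < p.eval 1 := by
  rw [eval_eq_sum_range]
  simp only [one_pow, mul_one]
  exact sum_pos' (fun i _ => h i)
    ⟨_, self_mem_range_succ _, (h _).lt_of_ne' (leadingCoeff_ne_zero.mpr hp)⟩

theorem Polynomial.sum_ne_zero_of_coeff_nonneg {ι : Type*} {s : Finset ι} {f : ι → R[X]}
    (h : ∀ i ∈ s, ∀ j, 0 ≤ (f i).coeff j) {i : ι} (hi : i ∈ s) (hfi : f i ≠ 0) :
    ∑ i ∈ s, f i ≠ 0 := by
  intro hsum
  have hpos : 0 < (∑ i ∈ s, f i).coeff (f i).natDegree := by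
    rw [finsetSum_coeff]
    exact sum_pos' (fun k hk => h k hk _)
      ⟨i, hi, (h i hi _).lt_of_ne' (leadingCoeff_ne_zero.mpr hfi)⟩
  simp [hsum] at hpos

end NonnegCoeff

section DerivPowMatrix

variable (R : Type*) [CommRing R] {m : ℕ}

noncomputable def derivPowMatrix (b c : Fin m → ℕ) : Matrix (Fin m) (Fin m) R[X] :=
  Matrix.of fun k l => derivative^[b k] (X ^ c l)

variable {R}

theorem derivative_det_derivPowMatrix (b c : Fin m → ℕ) :
    derivative (derivPowMatrix R b c).det =
      ∑ k, (derivPowMatrix R (Function.update b k (b k + 1)) c).det := by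
  rw [derivative_det_eq_sum_updateRow]
  refine sum_congr rfl fun k _ => congrArg det (ext fun q l => ?_)
  rcases eq_or_ne q k with rfl | hq
  · simp [derivPowMatrix, Function.iterate_succ_apply']
  · simp [derivPowMatrix, hq]

theorem det_derivPowMatrix_eq_zero_of_lt {b c : Fin m → ℕ} (hb : Monotone b) (hc : Monotone c)
    {k : Fin m} (hk : c k < b k) : (derivPowMatrix R b c).det = 0 := by
  refine det_eq_zero_of_card_lt _ (S := Iic k) (T := Iio k) (by simp) fun q hq l hl => ?_
  rw [mem_Iio, not_lt] at hq
  exact iterate_derivative_eq_zero <|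
    (natDegree_X_pow_le _).trans_lt ((hc (mem_Iic.mp hl)).trans_lt (hk.trans_le (hb hq)))

theorem det_derivPowMatrix_self {c : Fin m → ℕ} (hc : StrictMono c) :
    (derivPowMatrix R c c).det = C (∏ k, ((c k).factorial : R)) := by
  rw [det_of_isUpperTriangular, map_prod]
  · simp [derivPowMatrix, iterate_derivative_X_pow_eq_C_mul, Nat.descFactorial_self]
  · intro k l hlk
    exact iterate_derivative_eq_zero ((natDegree_X_pow_le _).trans_lt (hc hlk))

theorem eval_zero_det_derivPowMatrix {b c : Fin m → ℕ} {k : Fin m} (hk : ∀ l, c l ≠ b k) :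
    (derivPowMatrix R b c).det.eval 0 = 0 := by
  rw [← coe_evalRingHom, RingHom.map_det]
  refine det_eq_zero_of_row_eq_zero k fun l => ?_
  simp [derivPowMatrix, ← coeff_zero_eq_eval_zero, coeff_iterate_derivative, coeff_X_pow,
    (hk l).symm]

theorem eval_one_det_derivPowMatrix (b c : Fin m → ℕ) :
    (derivPowMatrix R b c).det.eval 1 =
      (Matrix.of fun k l => ((c l).descFactorial (b k) : R)).det := by
  rw [← coe_evalRingHom, RingHom.map_det]
  congr 1
  ext k l
  simp [derivPowMatrix, iterate_derivative_X_pow_eq_C_mul]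

theorem det_derivPowMatrix_update_eq_zero_or {b c : Fin m → ℕ} (hb : StrictMono b)
    (hc : StrictMono c) (hbc : b ≤ c) (k : Fin m) :
    (derivPowMatrix R (Function.update b k (b k + 1)) c).det = 0 ∨
      StrictMono (Function.update b k (b k + 1)) ∧ Function.update b k (b k + 1) ≤ c := by
  by_cases hcoll : ∃ j ≠ k, b j = b k + 1
  · obtain ⟨j, hjk, hj⟩ := hcoll
    refine .inl (det_zero_of_row_eq hjk (funext fun l => ?_))
    simp [derivPowMatrix, hjk, hj]
  simp only [not_exists, not_and] at hcoll
  have hb' := hb.update_add_one hcoll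
  by_cases hck : c k < b k + 1
  · exact .inl (det_derivPowMatrix_eq_zero_of_lt (k := k) hb'.monotone hc.monotone
      (by simpa using hck))
  · exact .inr ⟨hb', update_add_one_le hbc (by omega)⟩

end DerivPowMatrix

section Positivity

variable {R : Type*} [CommRing R] [LinearOrder R] [IsStrictOrderedRing R] {m : ℕ}

theorem coeff_nonneg_det_derivPowMatrix_and_ne_zero {b c : Fin m → ℕ} (hb : StrictMono b)
    (hc : StrictMono c) (hbc : b ≤ c) :
    (∀ i, 0 ≤ (derivPowMatrix R b c).det.coeff i) ∧ (derivPowMatrix R b c).det ≠ 0 := by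
  rcases eq_or_ne b c with rfl | hne
  · have hpos : (0 : R) < ∏ k, ((b k).factorial : R) := prod_pos fun k _ => by positivity
    rw [det_derivPowMatrix_self hb]
    refine ⟨fun i => ?_, C_ne_zero.mpr hpos.ne'⟩
    rw [coeff_C]
    split_ifs
    exacts [hpos.le, le_rfl]
  have hterm : ∀ k, ∀ i,
      0 ≤ (derivPowMatrix R (Function.update b k (b k + 1)) c).det.coeff i := by
    intro k
    rcases det_derivPowMatrix_update_eq_zero_or (R := R) hb hc hbc k with h | ⟨hb', hbc'⟩
    · simp [h]
    · exact (coeff_nonneg_det_derivPowMatrix_and_ne_zero hb' hc hbc').1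
  have hderiv_ne : derivative (derivPowMatrix R b c).det ≠ 0 := by
    obtain ⟨k, hb', hbc'⟩ := exists_update_add_one_strictMono_le hb hc hbc hne
    rw [derivative_det_derivPowMatrix]
    exact sum_ne_zero_of_coeff_nonneg (fun k _ => hterm k) (mem_univ k)
      (coeff_nonneg_det_derivPowMatrix_and_ne_zero hb' hc hbc').2
  have hcoeff_zero : (derivPowMatrix R b c).det.coeff 0 = 0 := by
    obtain ⟨k, hk⟩ := exists_forall_ne_of_le_of_ne hb hc hbc hne
    rw [coeff_zero_eq_eval_zero, eval_zero_det_derivPowMatrix hk]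
  refine ⟨coeff_nonneg_of_derivative hcoeff_zero fun i => ?_,
    fun h => hderiv_ne (by rw [h, derivative_zero])⟩
  rw [derivative_det_derivPowMatrix, finsetSum_coeff]
  exact sum_nonneg fun k _ => hterm k i
termination_by ∑ k, (c k - b k)
decreasing_by all_goals exact sum_tsub_update_add_one_lt ‹_›

theorem det_descFactorial_pos {b c : Fin m → ℕ} (hb : StrictMono b) (hc : StrictMono c)
    (hbc : b ≤ c) : 0 < (Matrix.of fun k l => ((c l).descFactorial (b k) : R)).det := by
  obtain ⟨hcoeff, hne⟩ := coeff_nonneg_det_derivPowMatrix_and_ne_zero (R := R) hb hc hbc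
  rw [← eval_one_det_derivPowMatrix]
  exact eval_one_pos_of_coeff_nonneg hcoeff hne

end Positivity

theorem Finset.orderEmbOfFin_le_of_card_filter_le {α : Type*} [LinearOrder α] {s t : Finset α}
    {r : ℕ} (hs : #s = r) (ht : #t = r) (h : ∀ a, #{x ∈ t | x ≤ a} ≤ #{x ∈ s | x ≤ a})
    (k : Fin r) : s.orderEmbOfFin hs k ≤ t.orderEmbOfFin ht k := by
  by_contra! hlt
  have hcount (u : Finset α) (hu : #u = r) (a : α) :
      #{x ∈ u | x ≤ a} = #{i | u.orderEmbOfFin hu i ≤ a} := by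
    conv_lhs => rw [← u.map_orderEmbOfFin_univ hu]
    rw [filter_map, card_map]
    rfl
  have ht' : #(Iic k) ≤ #{i | t.orderEmbOfFin ht i ≤ t.orderEmbOfFin ht k} :=
    card_le_card fun i hi => by simpa using mem_Iic.mp hi
  have hs' : #{i | s.orderEmbOfFin hs i ≤ t.orderEmbOfFin ht k} ≤ #(Iio k) :=
    card_le_card fun i hi => by
      simp only [mem_filter, mem_univ, true_and] at hi
      exact mem_Iio.mpr ((s.orderEmbOfFin hs).lt_iff_lt.mp (hi.trans_lt hlt))
  have := h (t.orderEmbOfFin ht k)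
  rw [hcount s hs, hcount t ht] at this
  rw [Fin.card_Iic] at ht'
  rw [Fin.card_Iio] at hs'
  omega

/-- `∑ c ∈ C, c.descFactorial b * v c` is the `b`-th derivative at `1` of `∑ c ∈ C, v c * t^c`. -/
theorem eq_zero_of_sum_descFactorial_mul_eq_zero {R : Type*} [CommRing R] [LinearOrder R]
    [IsStrictOrderedRing R] {N : ℕ} {B C : Finset (Fin N)} (hcard : #B = #C)
    (hdom : ∀ j, #{c ∈ C | c ≤ j} ≤ #{b ∈ B | b ≤ j}) {v : Fin N → R}
    (hv : ∀ b ∈ B, ∑ c ∈ C, ((c : ℕ).descFactorial b : R) * v c = 0) :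
    ∀ c ∈ C, v c = 0 := by
  set β := B.orderEmbOfFin hcard
  set γ := C.orderEmbOfFin rfl
  have hdet := det_descFactorial_pos (R := R) (b := fun k => (β k : ℕ))
    (c := fun l => (γ l : ℕ)) (fun _ _ h => β.strictMono h) (fun _ _ h => γ.strictMono h)
    (fun k => orderEmbOfFin_le_of_card_filter_le hcard rfl hdom k)
  have hw : v ∘ γ = 0 := by
    refine eq_zero_of_mulVec_eq_zero hdet.ne' (funext fun k => ?_)
    have hsum := sum_map univ γ.toEmbedding fun c => ((c : ℕ).descFactorial (β k) : R) * v c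
    rw [map_orderEmbOfFin_univ, hv _ (orderEmbOfFin_mem B hcard k)] at hsum
    exact hsum.symm
  intro c hc
  obtain ⟨l, rfl⟩ : c ∈ Set.range γ := by rwa [range_orderEmbOfFin]
  exact congrFun hw l

section TwoPoint

variable {n : ℕ}

def birkhoffMatrix (e : Fin (n + 1) → Fin 2 × Fin (n + 1)) :
    Matrix (Fin (n + 1)) (Fin (n + 1)) ℚ :=
  Matrix.of fun q m =>
    ((m : ℕ).descFactorial (e q).2 : ℚ) * (((e q).1 : ℕ) : ℚ) ^ ((m : ℕ) - (e q).2)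

theorem birkhoffMatrix_row_of_eq_zero {e : Fin (n + 1) → Fin 2 × Fin (n + 1)}
    {q j : Fin (n + 1)} (hq : e q = (0, j)) :
    birkhoffMatrix e q = Pi.single j ((j : ℕ).factorial : ℚ) := by
  ext m
  rcases lt_trichotomy m j with h | rfl | h
  · simp [birkhoffMatrix, hq, h.ne, Nat.descFactorial_eq_zero_iff_lt.mpr (Fin.lt_def.mp h)]
  · simp [birkhoffMatrix, hq, Nat.descFactorial_self]
  · simp [birkhoffMatrix, hq, h.ne', Nat.sub_ne_zero_of_lt (Fin.lt_def.mp h)]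

theorem birkhoffMatrix_row_of_eq_one {e : Fin (n + 1) → Fin 2 × Fin (n + 1)}
    {q j : Fin (n + 1)} (hq : e q = (1, j)) :
    birkhoffMatrix e q = fun m : Fin (n + 1) => ((m : ℕ).descFactorial j : ℚ) := by
  ext m
  simp [birkhoffMatrix, hq]

theorem det_birkhoffMatrix_eq_zero (e : Fin (n + 1) → Fin 2 × Fin (n + 1)) {j : Fin (n + 1)}
    (h : #{q | (e q).2 ≤ j} < j + 1) : (birkhoffMatrix e).det = 0 := by
  refine det_eq_zero_of_card_lt _ (S := Iic j) (by simpa using h) fun q hq m hm => ?_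
  have hlt : m < (e q).2 := (mem_Iic.mp hm).trans_lt (by simpa using hq)
  simp [birkhoffMatrix, Nat.descFactorial_eq_zero_iff_lt.mpr hlt]

theorem det_birkhoffMatrix_ne_zero {e : Fin (n + 1) → Fin 2 × Fin (n + 1)}
    {A B : Finset (Fin (n + 1))} (hA : ∀ j ∈ A, ∃ q, e q = (0, j))
    (hB : ∀ j ∈ B, ∃ q, e q = (1, j)) (hcard : #A + #B = n + 1)
    (hpolya : ∀ j : Fin (n + 1), (j : ℕ) + 1 ≤ #{k ∈ A | k ≤ j} + #{k ∈ B | k ≤ j}) :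
    (birkhoffMatrix e).det ≠ 0 := by
  intro hdet
  obtain ⟨v, hv0, hv⟩ := exists_mulVec_eq_zero_iff.mpr hdet
  have hrow (q : Fin (n + 1)) : birkhoffMatrix e q ⬝ᵥ v = 0 := congrFun hv q
  have hvA : ∀ j ∈ A, v j = 0 := by
    intro j hj
    obtain ⟨q, hq⟩ := hA j hj
    simpa [birkhoffMatrix_row_of_eq_zero hq, Nat.factorial_ne_zero] using hrow q
  have hvAc : ∀ c ∈ Aᶜ, v c = 0 := by
    refine eq_zero_of_sum_descFactorial_mul_eq_zero (B := B)
      (by rw [card_compl, Fintype.card_fin]; omega) (fun j => ?_) fun b hb => ?_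
    · have hsplit : #{k ∈ A | k ≤ j} + #{k ∈ Aᶜ | k ≤ j} = j + 1 := by
        rw [← card_union_of_disjoint (disjoint_filter_filter disjoint_compl_right),
          ← filter_union, union_compl, filter_ge_eq_Iic, Fin.card_Iic]
      have := hpolya j
      omega
    · obtain ⟨q, hq⟩ := hB b hb
      have hrowq := hrow q
      rw [birkhoffMatrix_row_of_eq_one hq, dotProduct, ← sum_compl_add_sum A,
        sum_eq_zero (s := A) fun j hj => by rw [hvA j hj, mul_zero], add_zero] at hrowq
      exact hrowq
  exact hv0 (funext fun j => if hj : j ∈ A then hvA j hj else hvAc j (mem_compl.mpr hj))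

theorem card_filter_snd_le_eq {E : Fin 2 → Fin (n + 1) → Bool}
    {e : Fin (n + 1) → Fin 2 × Fin (n + 1)} (he : Function.Injective e)
    (hone : ∀ q, E (e q).1 (e q).2 = true)
    (hsurj : ∀ p : Fin 2 × Fin (n + 1), E p.1 p.2 → ∃ q, e q = p) (j : Fin (n + 1)) :
    #{q | (e q).2 ≤ j} = #{k | E 0 k ∧ k ≤ j} + #{k | E 1 k ∧ k ≤ j} := by
  rw [card_nbij (t := {p : Fin 2 × Fin (n + 1) | E p.1 p.2 ∧ p.2 ≤ j}) e
    (by simp [Set.MapsTo, hone]) he.injOn fun p hp => by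
      obtain ⟨hE, hj⟩ : E p.1 p.2 ∧ p.2 ≤ j := by simpa using hp
      obtain ⟨q, rfl⟩ := hsurj p hE
      exact ⟨q, by simpa using hj, rfl⟩]
  rw [card_filter, Fintype.sum_prod_type, Fin.sum_univ_two, ← card_filter, ← card_filter]

end TwoPoint

theorem stmt_16 {n : ℕ} (E : Fin 2 → Fin (n + 1) → Bool)
    (hinc : ∑ i : Fin 2, ∑ j : Fin (n + 1), (if E i j then 1 else 0) = n + 1)
    (e : Fin (n + 1) → Fin 2 × Fin (n + 1))
    (he : Function.Injective e)
    (hone : ∀ q, E (e q).1 (e q).2 = true) :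
    IsUnit (Matrix.of fun (q : Fin (n + 1)) (m : Fin (n + 1)) =>
        (((m : ℕ).descFactorial ((e q).2 : ℕ) : ℚ)) *
          ((((e q).1 : ℕ) : ℚ)) ^ ((m : ℕ) - ((e q).2 : ℕ))) ↔
      ∀ j : Fin (n + 1),
        (j : ℕ) + 1 ≤ ∑ i : Fin 2, ∑ k ∈ Finset.univ.filter (fun k : Fin (n + 1) => k ≤ j),
          (if E i k then 1 else 0) := by
  have hsupp : #{p : Fin 2 × Fin (n + 1) | E p.1 p.2} = n + 1 := by
    rwa [card_filter, Fintype.sum_prod_type]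
  have hsurj (p : Fin 2 × Fin (n + 1)) (hp : E p.1 p.2) : ∃ q, e q = p := by
    obtain ⟨q, -, hq⟩ := surj_on_of_inj_on_of_card_le (s := univ)
      (t := {p : Fin 2 × Fin (n + 1) | E p.1 p.2}) (fun q _ => e q) (by simp [hone])
      (fun _ _ _ _ h => he h) (by simp [hsupp]) p (by simpa using hp)
    exact ⟨q, hq.symm⟩
  have hpolya_sum (j : Fin (n + 1)) :
      ∑ i : Fin 2, ∑ k ∈ univ.filter (· ≤ j), (if E i k then 1 else 0) =
        #{k | E 0 k ∧ k ≤ j} + #{k | E 1 k ∧ k ≤ j} := by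
    simp [Fin.sum_univ_two, sum_boole, filter_filter, and_comm]
  change IsUnit (birkhoffMatrix e) ↔ _
  simp_rw [isUnit_iff_isUnit_det, isUnit_iff_ne_zero, hpolya_sum,
    ← card_filter_snd_le_eq he hone hsurj]
  constructor
  · intro hdet j
    by_contra! h
    exact hdet (det_birkhoffMatrix_eq_zero e h)
  · intro hpolya
    refine det_birkhoffMatrix_ne_zero (A := {k | E 0 k}) (B := {k | E 1 k})
      (fun j hj => hsurj (0, j) (by simpa using hj))
      (fun j hj => hsurj (1, j) (by simpa using hj))
      (by simpa [Fin.sum_univ_two, sum_boole] using hinc) fun j => ?_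
    simpa [filter_filter, card_filter_snd_le_eq he hone hsurj] using hpolya j
end

section
/- Let E be a 2×(n+1) incidence matrix with m ≥ 2 ones in its first row. Define E_1 from E by exchanging the first 1 in row 0 with the first 0 in row 1 (making that row-0 entry 0 and that row-1 entry 1), and E_2 from E by exchanging the last m−1 ones in row 0 with the last m−1 zeros in row 1. Then E = E_1 +̇ E_2, both E_1 and E_2 are incidence matrices, |E_1(0,:)| = m−1 < m, |E_2(0,:)| = 1 < m, and the number of ones in row 0 of E equals the number of positions at which row 0 of E_1 or row 0 of E_2 has a 1 (the OR of rows 0 of E_1 and E_2). -/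
def sumDot {n : ℕ} (E1 E2 : Fin 2 → Fin (n + 1) → Bool) : Fin 2 → Fin (n + 1) → Bool :=
  fun i j => if i = 0 then E1 0 j || E2 0 j else E1 1 j && E2 1 j

def isIncidence {n : ℕ} (E : Fin 2 → Fin (n + 1) → Bool) : Prop :=
  ∑ i : Fin 2, ∑ j : Fin (n + 1), (if E i j then 1 else 0) = n + 1

theorem stmt_19 {n m : ℕ} (E : Fin 2 → Fin (n + 1) → Bool)
    (hinc : isIncidence E)
    (hm : (Finset.univ.filter fun j => E 0 j = true).card = m) (hm2 : 2 ≤ m)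
    -- a : column of the first 1 in row 0;  b : column of the first 0 in row 1
    (a b : Fin (n + 1))
    (ha : E 0 a = true) (ha' : ∀ j < a, E 0 j = false)
    (hb : E 1 b = false) (hb' : ∀ j < b, E 1 j = true)
    -- S : the last m-1 ones of row 0;  Z : the last m-1 zeros of row 1
    (S Z : Finset (Fin (n + 1)))
    (hS : ∀ j ∈ S, E 0 j = true) (hScard : S.card = m - 1)
    (hSlast : ∀ j ∈ S, ∀ j' ∉ S, E 0 j' = true → j' < j)
    (hZ : ∀ j ∈ Z, E 1 j = false) (hZcard : Z.card = m - 1)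
    (hZlast : ∀ j ∈ Z, ∀ j' ∉ Z, E 1 j' = false → j' < j)
    -- E1 : E with the first 1 of row 0 exchanged with the first 0 of row 1
    (E1 : Fin 2 → Fin (n + 1) → Bool)
    (hE1 : ∀ j, (E1 0 j = if j = a then false else E 0 j) ∧
               (E1 1 j = if j = b then true else E 1 j))
    -- E2 : E with the last m-1 ones of row 0 exchanged with the last m-1 zeros of row 1
    (E2 : Fin 2 → Fin (n + 1) → Bool)
    (hE2 : ∀ j, (E2 0 j = if j ∈ S then false else E 0 j) ∧
               (E2 1 j = if j ∈ Z then true else E 1 j)) :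
    E = sumDot E1 E2 ∧
    isIncidence E1 ∧ isIncidence E2 ∧
    (Finset.univ.filter fun j => E1 0 j = true).card = m - 1 ∧
    (Finset.univ.filter fun j => E2 0 j = true).card = 1 ∧
    m - 1 < m ∧ 1 < m ∧
    (Finset.univ.filter fun j => E 0 j = true).card =
      ∑ j : Fin (n + 1), (if E1 0 j || E2 0 j then 1 else 0) := by
  have hE10 := fun j => (hE1 j).1
  have hE11 := fun j => (hE1 j).2
  have hE20 := fun j => (hE2 j).1
  have hE21 := fun j => (hE2 j).2
  have hcount : ∀ (f : Fin (n+1) → Bool),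
      ∑ j : Fin (n+1), (if f j then 1 else 0)
        = (Finset.univ.filter fun j => f j = true).card := by
    intro f; rw [Finset.card_filter]
  have hrow : (Finset.univ.filter fun j => E 0 j = true).card
      + (Finset.univ.filter fun j => E 1 j = true).card = n + 1 := by
    unfold isIncidence at hinc
    rw [Fin.sum_univ_two, hcount (E 0), hcount (E 1)] at hinc
    exact hinc
  have hzeros : (Finset.univ.filter fun j => E 1 j = false).card = m := by
    have h2 := Finset.card_filter_add_card_filter_not
      (s := (Finset.univ : Finset (Fin (n+1)))) (p := fun j => E 1 j = true)
    simp only [Bool.not_eq_true, Finset.card_univ, Fintype.card_fin] at h2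
    omega
  have haS : a ∉ S := by
    intro haS
    have hsub : (Finset.univ.filter fun j => E 0 j = true) ⊆ S := by
      intro j hj
      simp only [Finset.mem_filter, Finset.mem_univ, true_and] at hj
      by_contra hjS
      have hlt := hSlast a haS j hjS hj
      rw [ha' j hlt] at hj; exact Bool.false_ne_true hj
    have := Finset.card_le_card hsub
    omega
  have hbZ : b ∉ Z := by
    intro hbZ
    have hsub : (Finset.univ.filter fun j => E 1 j = false) ⊆ Z := by
      intro j hj
      simp only [Finset.mem_filter, Finset.mem_univ, true_and] at hj
      by_contra hjZ
      have hlt := hZlast b hbZ j hjZ hj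
      rw [hb' j hlt] at hj; simp at hj
    have := Finset.card_le_card hsub
    omega
  have hsum : E = sumDot E1 E2 := by
    funext i j
    fin_cases i
    · simp only [sumDot, Fin.isValue, if_pos rfl, hE10 j, hE20 j]
      by_cases hja : j = a
      · subst hja; simp [haS, ha]
      · by_cases hjS : j ∈ S
        · simp [hja, hjS, hS j hjS]
        · simp [hja, hjS]
    · have h1 : ((⟨1, by omega⟩ : Fin 2) = 0) = False := by simp [Fin.ext_iff]
      simp only [sumDot, Fin.isValue, h1, if_false, hE11 j, hE21 j]
      by_cases hjb : j = b
      · subst hjb; simp [hbZ, hb]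
      · by_cases hjZ : j ∈ Z
        · simp [hjb, hjZ, hZ j hjZ]
        · simp [hjb, hjZ]
  have hE1r0 : (Finset.univ.filter fun j => E1 0 j = true)
      = (Finset.univ.filter fun j => E 0 j = true) \ {a} := by
    ext j
    simp only [Finset.mem_filter, Finset.mem_univ, true_and, Finset.mem_sdiff,
      Finset.mem_singleton, hE10 j]
    by_cases h : j = a <;> simp [h]
  have haf : a ∈ (Finset.univ.filter fun j => E 0 j = true) := by
    simp [ha]
  have hE1r0card : (Finset.univ.filter fun j => E1 0 j = true).card = m - 1 := by
    rw [hE1r0, Finset.card_sdiff_of_subset (Finset.singleton_subset_iff.mpr haf)]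
    simp [hm]
  have hE1r1 : (Finset.univ.filter fun j => E1 1 j = true)
      = insert b (Finset.univ.filter fun j => E 1 j = true) := by
    ext j
    simp only [Finset.mem_filter, Finset.mem_univ, true_and, Finset.mem_insert, hE11 j]
    by_cases h : j = b <;> simp [h]
  have hbf : b ∉ (Finset.univ.filter fun j => E 1 j = true) := by
    simp [hb]
  have hE1r1card : (Finset.univ.filter fun j => E1 1 j = true).card
      = (Finset.univ.filter fun j => E 1 j = true).card + 1 := by
    rw [hE1r1, Finset.card_insert_of_notMem hbf]
  have hSsub : S ⊆ (Finset.univ.filter fun j => E 0 j = true) := by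
    intro j hj; simp [hS j hj]
  have hE2r0 : (Finset.univ.filter fun j => E2 0 j = true)
      = (Finset.univ.filter fun j => E 0 j = true) \ S := by
    ext j
    simp only [Finset.mem_filter, Finset.mem_univ, true_and, Finset.mem_sdiff, hE20 j]
    by_cases h : j ∈ S <;> simp [h]
  have hE2r0card : (Finset.univ.filter fun j => E2 0 j = true).card = 1 := by
    rw [hE2r0, Finset.card_sdiff_of_subset hSsub, hm, hScard]
    omega
  have hE2r1 : (Finset.univ.filter fun j => E2 1 j = true)
      = (Finset.univ.filter fun j => E 1 j = true) ∪ Z := by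
    ext j
    simp only [Finset.mem_filter, Finset.mem_univ, true_and, Finset.mem_union, hE21 j]
    by_cases h : j ∈ Z <;> simp [h]
  have hZdisj : Disjoint (Finset.univ.filter fun j => E 1 j = true) Z := by
    rw [Finset.disjoint_right]
    intro j hj
    simp [hZ j hj]
  have hE2r1card : (Finset.univ.filter fun j => E2 1 j = true).card
      = (Finset.univ.filter fun j => E 1 j = true).card + (m - 1) := by
    rw [hE2r1, Finset.card_union_of_disjoint hZdisj, hZcard]
  refine ⟨hsum, ?_, ?_, hE1r0card, hE2r0card, by omega, by omega, ?_⟩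
  · unfold isIncidence
    rw [Fin.sum_univ_two, hcount (E1 0), hcount (E1 1), hE1r0card, hE1r1card]
    omega
  · unfold isIncidence
    rw [Fin.sum_univ_two, hcount (E2 0), hcount (E2 1), hE2r0card, hE2r1card]
    omega
  · have hpt : ∀ j, E 0 j = (E1 0 j || E2 0 j) := by
      intro j
      conv_lhs => rw [hsum]
      simp [sumDot]
    rw [hcount (fun j => E1 0 j || E2 0 j)]
    congr 1
    ext j
    simp only [Finset.mem_filter, Finset.mem_univ, true_and, ← hpt j]
end
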